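/- Let F : S^n → ℝ be C² positive with ∇²F + Fσ > 0, Φ its Cahn–Hoffman map, and E_{n+1} the last coordinate unit vector. For ω₀ ∈ (−F(E_{n+1}), F(−E_{n+1})), define E^F_{n+1} = Φ(E_{n+1})/F(E_{n+1}) if ω₀ < 0, E^F_{n+1} = −Φ(−E_{n+1})/F(−E_{n+1}) if ω₀ > 0, and E^F_{n+1} = E_{n+1} if ω₀ = 0. Then F(z) + ω₀⟨z, E^F_{n+1}⟩ > 0 for every z ∈ S^n. -/

import Mathlib

open MeasureTheory

noncomputable section

abbrev Euc (n : ℕ) := EuclideanSpace ℝ (Fin (n + 1))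

def rinner {n : ℕ} (x y : Euc n) : ℝ := inner ℝ x y

def sph (n : ℕ) : Set (Euc n) := Metric.sphere 0 1

def vert (n : ℕ) : Euc n := EuclideanSpace.single (Fin.last n) 1

def Fdual {n : ℕ} (F : Euc n → ℝ) (x : Euc n) : ℝ :=
  sSup {y | ∃ z ∈ sph n, y = rinner x z / F z}

def sphGrad {n : ℕ} (F : Euc n → ℝ) (z : Euc n) : Euc n :=
  gradient F z - (rinner (gradient F z) z) • z

def cahnHoffman {n : ℕ} (F : Euc n → ℝ) (z : Euc n) : Euc n :=
  sphGrad F z + F z • z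

def APos {n : ℕ} (F : Euc n → ℝ) : Prop :=
  ∀ z ∈ sph n, ∀ v : Euc n, rinner v z = 0 → v ≠ 0 →
    0 < rinner (fderiv ℝ (cahnHoffman F) z v) v

def EFvert {n : ℕ} (F : Euc n → ℝ) (ω : ℝ) : Euc n :=
  if ω < 0 then (F (vert n))⁻¹ • cahnHoffman F (vert n)
  else if 0 < ω then -((F (-vert n))⁻¹ • cahnHoffman F (-vert n))
  else vert n

open Real Filter Set in
lemma ode_ineq {f p A : ℝ → ℝ}
    (hf : ∀ θ, HasDerivAt f (p θ) θ)
    (hp : ∀ θ, HasDerivAt p (A θ - f θ) θ)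
    (hApos : ∀ θ, 0 < A θ)
    {θ₀ : ℝ} (h0 : 0 < θ₀) (hπ : θ₀ < Real.pi) :
    f 0 * Real.cos θ₀ + p 0 * Real.sin θ₀ ≤ f θ₀ := by
  set g : ℝ → ℝ := fun θ => f θ - f 0 * Real.cos θ - p 0 * Real.sin θ with hgdef
  set q : ℝ → ℝ := fun θ => p θ + f 0 * Real.sin θ - p 0 * Real.cos θ with hqdef
  set W : ℝ → ℝ := fun θ => q θ * Real.sin θ - g θ * Real.cos θ with hWdef
  have hg : ∀ θ, HasDerivAt g (q θ) θ := fun θ => by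
    have h := ((hf θ).sub ((Real.hasDerivAt_cos θ).const_mul (f 0))).sub
      ((Real.hasDerivAt_sin θ).const_mul (p 0))
    refine h.congr_deriv ?_
    simp only [hqdef]
    ring
  have hq : ∀ θ, HasDerivAt q (A θ - g θ) θ := fun θ => by
    have h := ((hp θ).add ((Real.hasDerivAt_sin θ).const_mul (f 0))).sub
      ((Real.hasDerivAt_cos θ).const_mul (p 0))
    refine h.congr_deriv ?_
    simp [hgdef]; ring
  have hW : ∀ θ, HasDerivAt W (A θ * Real.sin θ) θ := fun θ => by
    have h := ((hq θ).mul (Real.hasDerivAt_sin θ)).sub ((hg θ).mul (Real.hasDerivAt_cos θ))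
    refine h.congr_deriv ?_
    simp [hWdef]; ring
  have hg0 : g 0 = 0 := by simp [hgdef]
  have hq0 : q 0 = 0 := by simp [hqdef]
  have hW0 : W 0 = 0 := by simp [hWdef, hg0]
  have hWmono : StrictMonoOn W (Set.Icc 0 Real.pi) := by
    apply strictMonoOn_of_deriv_pos (convex_Icc _ _)
    · exact fun x _ => (hW x).continuousAt.continuousWithinAt
    · intro x hx
      rw [interior_Icc] at hx
      rw [(hW x).deriv]
      exact mul_pos (hApos x) (Real.sin_pos_of_pos_of_lt_pi hx.1 hx.2)
  have hWpos : ∀ θ, 0 < θ → θ ≤ Real.pi → 0 < W θ := by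
    intro θ h1 h2
    have := hWmono (Set.left_mem_Icc.2 Real.pi_pos.le) ⟨h1.le, h2⟩ h1
    linarith [hW0]
  set h : ℝ → ℝ := fun θ => g θ / Real.sin θ with hhdef
  have hsinpos : ∀ θ ∈ Set.Ioc 0 θ₀, 0 < Real.sin θ := fun θ hθ =>
    Real.sin_pos_of_pos_of_lt_pi hθ.1 (lt_of_le_of_lt hθ.2 hπ)
  have hhmono : StrictMonoOn h (Set.Ioc 0 θ₀) := by
    apply strictMonoOn_of_deriv_pos (convex_Ioc _ _)
    · apply ContinuousOn.div
      · exact fun x _ => (hg x).continuousAt.continuousWithinAt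
      · exact Real.continuous_sin.continuousOn
      · exact fun x hx => (hsinpos x hx).ne'
    · intro x hx
      rw [interior_Ioc] at hx
      have hsx : Real.sin x ≠ 0 := (hsinpos x ⟨hx.1, hx.2.le⟩).ne'
      have hd : HasDerivAt h ((q x * Real.sin x - g x * Real.cos x) / (Real.sin x) ^ 2) x :=
        (hg x).div (Real.hasDerivAt_sin x) hsx
      rw [hd.deriv]
      exact div_pos (hWpos x hx.1 (le_of_lt (hx.2.trans hπ))) (by positivity)
  have hslope : Tendsto (fun θ => g θ / θ) (nhdsWithin 0 {(0:ℝ)}ᶜ) (nhds 0) := by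
    have h1 := (hg 0)
    rw [hasDerivAt_iff_tendsto_slope] at h1
    rw [hq0] at h1
    refine Filter.Tendsto.congr (fun x => ?_) h1
    simp [slope_def_field, hg0]
  have hsinlim : Tendsto (fun θ => θ / Real.sin θ) (nhdsWithin 0 {(0:ℝ)}ᶜ) (nhds 1) := by
    have h1 := Real.hasDerivAt_sin 0
    rw [hasDerivAt_iff_tendsto_slope] at h1
    have h2 : Tendsto (fun θ => Real.sin θ / θ) (nhdsWithin 0 {(0:ℝ)}ᶜ) (nhds 1) := by
      refine Filter.Tendsto.congr (fun x => ?_) (by simpa using h1)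
      simp [slope_def_field]
    have h3 := h2.inv₀ one_ne_zero
    simpa [inv_div] using h3
  have hlim : Tendsto h (nhdsWithin 0 (Set.Ioi 0)) (nhds 0) := by
    have h1 : Tendsto (fun θ => (g θ / θ) * (θ / Real.sin θ))
        (nhdsWithin 0 {(0:ℝ)}ᶜ) (nhds (0 * 1)) := hslope.mul hsinlim
    rw [mul_one] at h1
    have h2 : Tendsto h (nhdsWithin 0 {(0:ℝ)}ᶜ) (nhds 0) := by
      refine h1.congr' ?_
      filter_upwards [self_mem_nhdsWithin] with x hx
      have hx' : (x:ℝ) ≠ 0 := hx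
      rw [hhdef]
      rcases eq_or_ne (Real.sin x) 0 with hs | hs
      · simp [hs]
      · field_simp
    exact h2.mono_left (nhdsWithin_mono 0 (fun x hx => ne_of_gt hx))
  have hkey : 0 ≤ h θ₀ := by
    refine le_of_tendsto hlim ?_
    filter_upwards [Ioo_mem_nhdsGT_of_mem (Set.left_mem_Ico.2 h0)] with ε hε
    exact (hhmono ⟨hε.1, hε.2.le⟩ ⟨h0, le_refl _⟩ hε.2).le
  have hgpos : 0 ≤ g θ₀ := by
    have hs := Real.sin_pos_of_pos_of_lt_pi h0 hπ
    have h1 := mul_nonneg hkey hs.le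
    rwa [hhdef, div_mul_cancel₀ _ hs.ne'] at h1
  simp only [hgdef] at hgpos
  linarith

section Key

variable {n : ℕ}

lemma norm_eq_one_of_rinner {x : Euc n} (h : rinner x x = 1) : ‖x‖ = 1 := by
  have h2 : ‖x‖ * ‖x‖ = 1 := by rw [← real_inner_self_eq_norm_mul_norm]; exact h
  nlinarith [norm_nonneg x]

lemma mem_sph_iff {x : Euc n} : x ∈ sph n ↔ ‖x‖ = 1 := mem_sphere_zero_iff_norm

lemma inner_CH_self (F : Euc n → ℝ) {z : Euc n} (hz : ‖z‖ = 1) :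
    rinner (cahnHoffman F z) z = F z := by
  have hzz : inner ℝ z z = 1 := by
    rw [real_inner_self_eq_norm_mul_norm, hz, one_mul]
  simp only [cahnHoffman, sphGrad, rinner]
  rw [inner_add_left, inner_sub_left, real_inner_smul_left, real_inner_smul_left, hzz]
  ring

set_option maxHeartbeats 1000000 in
lemma contDiff_CH (F : Euc n → ℝ) (hF : ContDiff ℝ 2 F) :
    ContDiff ℝ 1 (cahnHoffman F) := by
  have hgrad : ContDiff ℝ 1 (gradient F) := by
    have h1 : ContDiff ℝ 1 (fderiv ℝ F) := hF.fderiv_right (by norm_num)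
    exact ((InnerProductSpace.toDual ℝ (Euc n)).symm.contDiff).comp h1
  have hF1 : ContDiff ℝ 1 F := hF.of_le one_le_two
  unfold cahnHoffman sphGrad rinner
  exact ((hgrad.sub ((hgrad.inner ℝ contDiff_id).smul contDiff_id)).add (hF1.smul contDiff_id))

set_option maxHeartbeats 4000000 in
lemma CH_inner_le (F : Euc n → ℝ) (hF : ContDiff ℝ 2 F) (hpos : ∀ z ∈ sph n, 0 < F z)
    (hA : APos F) {w z : Euc n} (hw : w ∈ sph n) (hz : z ∈ sph n) :
    rinner (cahnHoffman F w) z ≤ F z := by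
  have hwn : ‖w‖ = 1 := mem_sph_iff.1 hw
  have hzn : ‖z‖ = 1 := mem_sph_iff.1 hz
  have hww : inner ℝ w w = 1 := by rw [real_inner_self_eq_norm_mul_norm, hwn, one_mul]
  have hzz : inner ℝ z z = 1 := by rw [real_inner_self_eq_norm_mul_norm, hzn, one_mul]
  set a : ℝ := inner ℝ w z with hadef
  have haub : |a| ≤ 1 := by
    have := abs_real_inner_le_norm w z
    rwa [hwn, hzn, one_mul] at this
  rcases eq_or_lt_of_le (abs_le.1 haub).2 with ha1 | ha1
  · -- a = 1, z = w
    have : z = w := ((inner_eq_one_iff_of_norm_eq_one hwn hzn).1 ha1).symm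
    subst this
    rw [inner_CH_self F hzn]
  rcases eq_or_lt_of_le (abs_le.1 haub).1 with ham1 | ham1
  · -- a = -1, z = -w
    have hzw : z = -w := by
      have h1 : inner ℝ w (-z) = 1 := by
        rw [inner_neg_right, ← hadef]; linarith
      have h2 : ‖-z‖ = 1 := by rwa [norm_neg]
      have := (inner_eq_one_iff_of_norm_eq_one hwn h2).1 h1
      simpa using congrArg Neg.neg this.symm
    subst hzw
    have hFw : 0 < F w := hpos w hw
    have hFnw : 0 < F (-w) := hpos (-w) (mem_sph_iff.2 (by rwa [norm_neg]))
    have : rinner (cahnHoffman F w) (-w) = -F w := by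
      rw [rinner, inner_neg_right, ← rinner, inner_CH_self F hwn]
    rw [this]
    linarith
  -- main case: -1 < a < 1
  set s : ℝ := Real.sqrt (1 - a ^ 2) with hsdef
  have hs : 0 < s := Real.sqrt_pos.2 (by nlinarith)
  have hs2 : s ^ 2 = 1 - a ^ 2 := Real.sq_sqrt (by nlinarith)
  set u : Euc n := s⁻¹ • (z - a • w) with hudef
  have hwu : inner ℝ w u = 0 := by
    rw [hudef, real_inner_smul_right, inner_sub_right, real_inner_smul_right, hww, ← hadef]
    try ring
  have huw : inner ℝ u w = 0 := by rw [real_inner_comm]; exact hwu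
  have hwz' : inner ℝ z w = a := by rw [real_inner_comm]
  have hzaw : inner ℝ (z - a • w) (z - a • w) = s ^ 2 := by
    simp only [inner_sub_left, inner_sub_right, real_inner_smul_left, real_inner_smul_right]
    rw [hww, hzz, hwz', ← hadef, hs2]
    ring
  have huu : inner ℝ u u = 1 := by
    rw [hudef, real_inner_smul_left, real_inner_smul_right, hzaw]
    field_simp
    try ring
  have hun : ‖u‖ = 1 := norm_eq_one_of_rinner (by rw [rinner]; exact huu)
  -- expansion helper
  have expand : ∀ (α β γ δ : ℝ),
      inner ℝ (α • w + β • u) (γ • w + δ • u) = α * γ + β * δ := by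
    intro α β γ δ
    simp only [inner_add_left, inner_add_right, real_inner_smul_left, real_inner_smul_right,
      hww, huu, hwu, huw]
    ring
  set θ₀ : ℝ := Real.arccos a with hθdef
  have hθ0 : 0 < θ₀ := Real.arccos_pos.2 ha1
  have hθπ : θ₀ < Real.pi := by
    rcases lt_or_eq_of_le (Real.arccos_le_pi a) with h | h
    · exact h
    · exact absurd (Real.arccos_eq_pi.1 h) (by linarith)
  have hcos : Real.cos θ₀ = a := Real.cos_arccos (by linarith) (by linarith)
  have hsin : Real.sin θ₀ = s := by rw [hθdef, Real.sin_arccos, hsdef]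
  have hzeq : z = Real.cos θ₀ • w + Real.sin θ₀ • u := by
    rw [hcos, hsin, hudef, smul_smul, mul_inv_cancel₀ hs.ne', one_smul]
    try abel
  -- the great circle and its derivatives
  set c : ℝ → Euc n := fun θ => Real.cos θ • w + Real.sin θ • u with hcdef
  set c' : ℝ → Euc n := fun θ => (-Real.sin θ) • w + Real.cos θ • u with hc'def
  have hcc : ∀ θ, inner ℝ (c θ) (c θ) = 1 := fun θ => by
    rw [hcdef]; rw [expand]; nlinarith [Real.sin_sq_add_cos_sq θ]
  have hcmem : ∀ θ, c θ ∈ sph n := fun θ =>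
    mem_sph_iff.2 (norm_eq_one_of_rinner (by rw [rinner]; exact hcc θ))
  have hcc' : ∀ θ, inner ℝ (c θ) (c' θ) = 0 := fun θ => by
    rw [hcdef, hc'def, expand]; ring
  have hc'c : ∀ θ, inner ℝ (c' θ) (c θ) = 0 := fun θ => by
    rw [real_inner_comm]; exact hcc' θ
  have hc'c' : ∀ θ, inner ℝ (c' θ) (c' θ) = 1 := fun θ => by
    rw [hc'def, expand]; nlinarith [Real.sin_sq_add_cos_sq θ]
  have hc'ne : ∀ θ, c' θ ≠ 0 := fun θ h => by
    have := hc'c' θ; rw [h] at this; simp at this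
  have hcD : ∀ θ, HasDerivAt c (c' θ) θ := fun θ => by
    have h1 := ((Real.hasDerivAt_cos θ).smul_const w).add ((Real.hasDerivAt_sin θ).smul_const u)
    exact h1
  have hc'D : ∀ θ, HasDerivAt c' (-c θ) θ := fun θ => by
    have h1 := (((Real.hasDerivAt_sin θ).neg).smul_const w).add
      (((Real.hasDerivAt_cos θ).smul_const u))
    have h2 : -c θ = (-Real.cos θ) • w + (-Real.sin θ) • u := by
      rw [hcdef]; simp [neg_smul]; abel
    rw [hc'def]
    refine h1.congr_deriv ?_
    try rw [h2]
  -- differentiability of F and Φ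
  have hFd : Differentiable ℝ F := hF.differentiable (by norm_num)
  have hΦ : ContDiff ℝ 1 (cahnHoffman F) := contDiff_CH F hF
  have hΦd : Differentiable ℝ (cahnHoffman F) := hΦ.differentiable (by norm_num)
  set f : ℝ → ℝ := fun θ => F (c θ) with hfdef
  set p : ℝ → ℝ := fun θ => inner ℝ (cahnHoffman F (c θ)) (c' θ) with hpdef
  set A : ℝ → ℝ := fun θ => inner ℝ (fderiv ℝ (cahnHoffman F) (c θ) (c' θ)) (c' θ) with hAdef
  have hApos : ∀ θ, 0 < A θ := fun θ =>
    hA (c θ) (hcmem θ) (c' θ) (hc'c θ) (hc'ne θ)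
  have hfD : ∀ θ, HasDerivAt f (p θ) θ := fun θ => by
    have hgr := (hFd (c θ)).hasGradientAt
    have h1 := hgr.hasFDerivAt.comp_hasDerivAt θ (hcD θ)
    refine h1.congr_deriv ?_
    rw [InnerProductSpace.toDual_apply_apply]
    rw [hpdef]
    simp only [cahnHoffman, sphGrad, rinner]
    rw [inner_add_left, inner_sub_left, real_inner_smul_left, real_inner_smul_left, hcc' θ]
    ring
  have hpD : ∀ θ, HasDerivAt p (A θ - f θ) θ := fun θ => by
    have h1 : HasDerivAt (fun t => cahnHoffman F (c t))
        (fderiv ℝ (cahnHoffman F) (c θ) (c' θ)) θ :=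
      ((hΦd (c θ)).hasFDerivAt).comp_hasDerivAt θ (hcD θ)
    have h2 := HasDerivAt.inner ℝ h1 (hc'D θ)
    refine h2.congr_deriv ?_
    have h3 : inner ℝ (cahnHoffman F (c θ)) (-c θ) = -f θ := by
      rw [inner_neg_right, hfdef]
      have := inner_CH_self F (mem_sph_iff.1 (hcmem θ))
      rw [rinner] at this
      rw [this]
    rw [h3, hAdef]
    ring
  have hmain := ode_ineq hfD hpD hApos hθ0 hθπ
  -- unpack endpoint values
  have hc0 : c 0 = w := by simp only [hcdef]; simp
  have hc'0 : c' 0 = u := by simp only [hc'def]; simp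
  have hf0 : f 0 = F w := by simp only [hfdef]; rw [hc0]
  have hp0 : p 0 = inner ℝ (cahnHoffman F w) u := by
    simp only [hpdef]; rw [hc0, hc'0]
  have hcθ : c θ₀ = z := by simp only [hcdef]; exact hzeq.symm
  have hfθ : f θ₀ = F z := by simp only [hfdef]; rw [hcθ]
  have hΦwz : rinner (cahnHoffman F w) z =
      F w * Real.cos θ₀ + inner ℝ (cahnHoffman F w) u * Real.sin θ₀ := by
    rw [rinner, hzeq, inner_add_right, real_inner_smul_right, real_inner_smul_right]
    have := inner_CH_self F hwn
    rw [rinner] at this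
    rw [this]
    ring
  rw [hΦwz, ← hf0, ← hp0, ← hfθ]
  exact hmain

lemma vert_mem_sph : vert n ∈ sph n := by
  rw [mem_sph_iff, vert, EuclideanSpace.norm_single]
  norm_num

lemma neg_vert_mem_sph : -vert n ∈ sph n := by
  rw [mem_sph_iff, norm_neg, ← mem_sph_iff]
  exact vert_mem_sph

end Key

/-- positivity of `F(z) + ω₀⟨z, E^F_{n+1}⟩` on the sphere. -/
theorem aniso_positivity {n : ℕ} (F : Euc n → ℝ)
    (hF : ContDiff ℝ 2 F) (hpos : ∀ z ∈ sph n, 0 < F z) (hA : APos F)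
    (ω₀ : ℝ) (hω₁ : -F (vert n) < ω₀) (hω₂ : ω₀ < F (-vert n)) :
    ∀ z ∈ sph n, 0 < F z + ω₀ * rinner z (EFvert F ω₀) := by
  intro z hz
  have hFz : 0 < F z := hpos z hz
  have hFv : 0 < F (vert n) := hpos _ vert_mem_sph
  have hFnv : 0 < F (-vert n) := hpos _ neg_vert_mem_sph
  rcases lt_trichotomy ω₀ 0 with hneg | hzero | hposω
  · -- ω₀ < 0
    have hEF : EFvert F ω₀ = (F (vert n))⁻¹ • cahnHoffman F (vert n) := by
      rw [EFvert, if_pos hneg]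
    have hkey : rinner (cahnHoffman F (vert n)) z ≤ F z :=
      CH_inner_le F hF hpos hA vert_mem_sph hz
    have hrin : rinner z (EFvert F ω₀) = (F (vert n))⁻¹ * rinner (cahnHoffman F (vert n)) z := by
      rw [hEF, rinner, real_inner_smul_right, real_inner_comm, ← rinner]
    rw [hrin]
    set t := rinner (cahnHoffman F (vert n)) z with htdef
    have hinv : 0 < (F (vert n))⁻¹ := inv_pos.2 hFv
    have h1 : (F (vert n))⁻¹ * t ≤ (F (vert n))⁻¹ * F z :=
      mul_le_mul_of_nonneg_left hkey hinv.le
    have h2 : ω₀ * ((F (vert n))⁻¹ * F z) ≤ ω₀ * ((F (vert n))⁻¹ * t) :=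
      mul_le_mul_of_nonpos_left h1 hneg.le
    have h3 : F (vert n) * (F (vert n))⁻¹ = 1 := mul_inv_cancel₀ hFv.ne'
    have h4 : 0 < 1 + ω₀ * (F (vert n))⁻¹ := by nlinarith [mul_pos (show 0 < ω₀ + F (vert n) by linarith) hinv]
    nlinarith [mul_pos hFz h4]
  · -- ω₀ = 0
    subst hzero
    simpa using hFz
  · -- ω₀ > 0
    have hEF : EFvert F ω₀ = -((F (-vert n))⁻¹ • cahnHoffman F (-vert n)) := by
      rw [EFvert, if_neg (by linarith), if_pos hposω]
    have hkey : rinner (cahnHoffman F (-vert n)) z ≤ F z :=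
      CH_inner_le F hF hpos hA neg_vert_mem_sph hz
    have hrin : rinner z (EFvert F ω₀)
        = -((F (-vert n))⁻¹ * rinner (cahnHoffman F (-vert n)) z) := by
      rw [hEF, rinner, inner_neg_right, real_inner_smul_right, real_inner_comm, ← rinner]
    rw [hrin]
    set t := rinner (cahnHoffman F (-vert n)) z with htdef
    have hinv : 0 < (F (-vert n))⁻¹ := inv_pos.2 hFnv
    have h1 : (F (-vert n))⁻¹ * t ≤ (F (-vert n))⁻¹ * F z :=
      mul_le_mul_of_nonneg_left hkey hinv.le
    have h2 : ω₀ * ((F (-vert n))⁻¹ * t) ≤ ω₀ * ((F (-vert n))⁻¹ * F z) :=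
      mul_le_mul_of_nonneg_left h1 hposω.le
    have h3 : F (-vert n) * (F (-vert n))⁻¹ = 1 := mul_inv_cancel₀ hFnv.ne'
    have h4 : 0 < 1 - ω₀ * (F (-vert n))⁻¹ := by
      nlinarith [mul_pos (show 0 < F (-vert n) - ω₀ by linarith) hinv]
    nlinarith [mul_pos hFz h4]
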